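/- Let 0 < p < 1 and λ ∈ [0,1]. The map (A, B, C) ↦ C^{1/2} (C^{-1/2}(λA + (1-λ)B)C^{-1/2})^{-p} C^{1/2} is jointly convex on triples of n×n positive definite complex matrices: for positive definite triples (A₁,B₁,C₁), (A₂,B₂,C₂) and α ∈ [0,1], with (A,B,C) = α(A₁,B₁,C₁) + (1-α)(A₂,B₂,C₂) taken entrywise, C^{1/2}(C^{-1/2}(λA+(1-λ)B)C^{-1/2})^{-p} C^{1/2} ≤ α C₁^{1/2}(C₁^{-1/2}(λA₁+(1-λ)B₁)C₁^{-1/2})^{-p} C₁^{1/2} + (1-α) C₂^{1/2}(C₂^{-1/2}(λA₂+(1-λ)B₂)C₂^{-1/2})^{-p} C₂^{1/2} in the Loewner order. -/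

import Mathlib

open Matrix
open scoped ComplexOrder

/-- Matrix power by a real exponent via the functional calculus
(unitary diagonalization for Hermitian matrices; junk value otherwise). -/
noncomputable def mpow {n : ℕ} (A : Matrix (Fin n) (Fin n) ℂ) (q : ℝ) :
    Matrix (Fin n) (Fin n) ℂ :=
  if hA : A.IsHermitian then
    (hA.eigenvectorUnitary : Matrix (Fin n) (Fin n) ℂ) *
      Matrix.diagonal (fun i => ((hA.eigenvalues i ^ q : ℝ) : ℂ)) *
      (star (hA.eigenvectorUnitary : Matrix (Fin n) (Fin n) ℂ))
  else 0

/-- The perspective map `(A,B,C) ↦ C^{1/2} (C^{-1/2}(λA + (1-λ)B)C^{-1/2})^{-p} C^{1/2}`. -/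
noncomputable def persp {n : ℕ} (lam p : ℝ) (A B C : Matrix (Fin n) (Fin n) ℂ) :
    Matrix (Fin n) (Fin n) ℂ :=
  mpow C (1 / 2) *
    mpow (mpow C (-(1 / 2)) * (lam • A + (1 - lam) • B) * mpow C (-(1 / 2))) (-p) *
      mpow C (1 / 2)

/-!
For `0 < p < 1` and `x > 0`, `x ^ (-p) = c⁻¹ * ∫₀^∞ t ^ (-p) / (x + t) dt` with
`c = ∫₀^∞ t ^ (-p) / (1 + t) dt > 0`. Applied to the eigenvalues of `C^{-1/2} M C^{-1/2}` and
conjugated by `C^{1/2}`, this writes the perspective as `c⁻¹ * ∫₀^∞ t ^ (-p) • C (M + t C)⁻¹ C dt`,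
where `M = λA + (1-λ)B`. Since `M + t C` depends linearly on `(M, C)` and `(N, B) ↦ Bᴴ N⁻¹ B` is
jointly convex (a Schur complement argument), every integrand is jointly convex, and so is the
integral. Only the scalar quadratic forms `Re ⟪v, X v⟫` (`quadFormRe v X`) are ever integrated.
-/

open MeasureTheory Set

section ScalarIntegral

variable {p x : ℝ}

lemma one_sub_mem_Ioo_zero_one (hp : p ∈ Ioo (0 : ℝ) 1) : 1 - p ∈ Ioo (0 : ℝ) 1 :=
  ⟨by linarith [hp.2], by linarith [hp.1]⟩

lemma eqOn_rpow_neg_div_add (hp : p ∈ Ioo 0 1) (hx : 0 < x) :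
    EqOn (fun t => t ^ (-p) / (x + t)) (fun t => x⁻¹ * Real.rpowIntegrand₀₁ (1 - p) t x)
      (Ioi 0) := by
  intro t ht
  dsimp only
  rw [Real.rpowIntegrand₀₁_eq_pow_div (one_sub_mem_Ioo_zero_one hp) (le_of_lt ht) hx.le,
    sub_sub_cancel_left, add_comm t]
  field_simp

lemma integrableOn_rpow_neg_div_add (hp : p ∈ Ioo 0 1) (hx : 0 < x) :
    IntegrableOn (fun t => t ^ (-p) / (x + t)) (Ioi 0) :=
  IntegrableOn.congr_fun
    ((Real.integrableOn_rpowIntegrand₀₁_Ioi (one_sub_mem_Ioo_zero_one hp) hx.le).const_mul x⁻¹)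
    (eqOn_rpow_neg_div_add hp hx).symm measurableSet_Ioi

lemma integral_rpow_neg_div_add_eq_rpowIntegrand (hp : p ∈ Ioo 0 1) (hx : 0 < x) :
    ∫ t in Ioi 0, t ^ (-p) / (x + t) =
      x ^ (-p) * ∫ t in Ioi 0, Real.rpowIntegrand₀₁ (1 - p) t 1 := by
  rw [setIntegral_congr_fun measurableSet_Ioi (eqOn_rpow_neg_div_add hp hx), integral_const_mul,
    Real.integral_rpowIntegrand₀₁_eq_rpow_mul_const (one_sub_mem_Ioo_zero_one hp) hx.le,
    Real.rpow_sub hx, Real.rpow_one, Real.rpow_neg hx.le]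
  field_simp

lemma integral_rpow_neg_div_add (hp : p ∈ Ioo 0 1) (hx : 0 < x) :
    ∫ t in Ioi 0, t ^ (-p) / (x + t) = (∫ t in Ioi (0 : ℝ), t ^ (-p) / (1 + t)) * x ^ (-p) := by
  rw [integral_rpow_neg_div_add_eq_rpowIntegrand hp hx,
    integral_rpow_neg_div_add_eq_rpowIntegrand hp one_pos, Real.one_rpow, one_mul, mul_comm]

lemma integral_rpow_neg_div_one_add_pos (hp : p ∈ Ioo 0 1) :
    0 < ∫ t in Ioi (0 : ℝ), t ^ (-p) / (1 + t) := by
  rw [integral_rpow_neg_div_add_eq_rpowIntegrand hp one_pos, Real.one_rpow, one_mul]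
  exact Real.integral_rpowIntegrand₀₁_one_pos (one_sub_mem_Ioo_zero_one hp)

end ScalarIntegral

section QuadForm

variable {m 𝕜 : Type*} [Fintype m] [RCLike 𝕜]

noncomputable def quadFormRe (v : m → 𝕜) : Matrix m m 𝕜 →ₗ[ℝ] ℝ where
  toFun A := RCLike.re (star v ⬝ᵥ (A *ᵥ v))
  map_add' A B := by simp [add_mulVec, dotProduct_add]
  map_smul' c A := by simp [smul_mulVec, dotProduct_smul, RCLike.smul_re]

lemma quadFormRe_apply (v : m → 𝕜) (A : Matrix m m 𝕜) :
    quadFormRe v A = RCLike.re (star v ⬝ᵥ (A *ᵥ v)) := rfl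

lemma quadFormRe_mul_mul_conjTranspose (v : m → 𝕜) (B N : Matrix m m 𝕜) :
    quadFormRe v (B * N * Bᴴ) = quadFormRe (Bᴴ *ᵥ v) N := by
  simp only [quadFormRe_apply, ← mulVec_mulVec, dotProduct_mulVec, star_mulVec,
    conjTranspose_conjTranspose]

lemma Matrix.IsHermitian.quadFormRe_mul_mul {B : Matrix m m 𝕜} (hB : B.IsHermitian)
    (v : m → 𝕜) (N : Matrix m m 𝕜) : quadFormRe v (B * N * B) = quadFormRe (B *ᵥ v) N := by
  have h := quadFormRe_mul_mul_conjTranspose v B N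
  rwa [hB.eq] at h

lemma quadFormRe_diagonal [DecidableEq m] (v : m → 𝕜) (d : m → ℝ) :
    quadFormRe v (diagonal fun i => (d i : 𝕜)) = ∑ i, d i * ‖v i‖ ^ 2 := by
  simp only [quadFormRe_apply, dotProduct, mulVec_diagonal, map_sum]
  refine Finset.sum_congr rfl fun i _ => ?_
  rw [Pi.star_apply, RCLike.star_def, mul_left_comm, RCLike.conj_mul, ← RCLike.ofReal_pow,
    ← RCLike.ofReal_mul, RCLike.ofReal_re]

lemma Matrix.PosSemidef.of_quadFormRe_nonneg {A : Matrix m m 𝕜} (hA : A.IsHermitian)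
    (h : ∀ v, 0 ≤ quadFormRe v A) : A.PosSemidef :=
  .of_dotProduct_mulVec_nonneg hA fun v =>
    RCLike.nonneg_iff.mpr ⟨h v, hA.im_star_dotProduct_mulVec_self v⟩

end QuadForm

section Spectral

variable {m 𝕜 : Type*} [Fintype m] [DecidableEq m] [RCLike 𝕜] {A : Matrix m m 𝕜}

lemma Matrix.continuousOn_spectrum (f : ℝ → ℝ) : ContinuousOn f (spectrum ℝ A) :=
  A.finite_real_spectrum.continuousOn f

lemma Matrix.PosDef.pos_of_mem_spectrum (hA : A.PosDef) {x : ℝ} (hx : x ∈ spectrum ℝ A) :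
    0 < x := by
  rw [hA.1.spectrum_real_eq_range_eigenvalues] at hx
  obtain ⟨i, rfl⟩ := hx
  exact hA.eigenvalues_pos i

lemma Matrix.PosDef.inv_add_smul_one_eq_cfc (hA : A.PosDef) {t : ℝ} (ht : 0 ≤ t) :
    (A + t • 1)⁻¹ = cfc (fun x : ℝ => (x + t)⁻¹) A := by
  have hsum : A + t • 1 = cfc (fun x : ℝ => x + t) A := by
    rw [cfc_add_const t _ A (continuousOn_spectrum _) hA.1.isSelfAdjoint,
      cfc_id' ℝ A hA.1.isSelfAdjoint, Algebra.algebraMap_eq_smul_one]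
  refine inv_eq_left_inv ?_
  rw [hsum, ← cfc_mul _ _ A (continuousOn_spectrum _) (continuousOn_spectrum _)]
  refine (cfc_congr fun x hx => ?_).trans (cfc_const_one ℝ A hA.1.isSelfAdjoint)
  have := hA.pos_of_mem_spectrum hx
  field_simp

lemma Matrix.IsHermitian.quadFormRe_cfc (hA : A.IsHermitian) (f : ℝ → ℝ) (v : m → 𝕜) :
    quadFormRe v (cfc f A) =
      ∑ i, f (hA.eigenvalues i) * ‖(star (hA.eigenvectorUnitary : Matrix m m 𝕜) *ᵥ v) i‖ ^ 2 := by
  rw [hA.cfc_eq, IsHermitian.cfc, Unitary.conjStarAlgAut_apply, star_eq_conjTranspose,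
    quadFormRe_mul_mul_conjTranspose]
  exact quadFormRe_diagonal _ _

end Spectral

section ResolventIntegral

variable {m 𝕜 : Type*} [Fintype m] [DecidableEq m] [RCLike 𝕜] {p : ℝ} {X : Matrix m m 𝕜}

lemma Matrix.PosDef.eqOn_rpow_neg_mul_quadFormRe_inv_add (hX : X.PosDef) (v : m → 𝕜) :
    EqOn (fun t : ℝ => t ^ (-p) * quadFormRe v (X + t • 1)⁻¹)
      (fun t => ∑ i, ‖(star (hX.1.eigenvectorUnitary : Matrix m m 𝕜) *ᵥ v) i‖ ^ 2 *
        (t ^ (-p) / (hX.1.eigenvalues i + t))) (Ioi 0) := by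
  intro t ht
  dsimp only
  rw [hX.inv_add_smul_one_eq_cfc (le_of_lt ht), hX.1.quadFormRe_cfc, Finset.mul_sum]
  refine Finset.sum_congr rfl fun i _ => ?_
  ring

lemma Matrix.PosDef.integrableOn_rpow_neg_mul_quadFormRe_inv_add (hp : p ∈ Ioo 0 1)
    (hX : X.PosDef) (v : m → 𝕜) :
    IntegrableOn (fun t : ℝ => t ^ (-p) * quadFormRe v (X + t • 1)⁻¹) (Ioi 0) :=
  IntegrableOn.congr_fun
    (integrable_finsetSum _ fun i _ =>
      (integrableOn_rpow_neg_div_add hp (hX.eigenvalues_pos i)).const_mul _)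
    (hX.eqOn_rpow_neg_mul_quadFormRe_inv_add v).symm measurableSet_Ioi

lemma Matrix.PosDef.integral_rpow_neg_mul_quadFormRe_inv_add (hp : p ∈ Ioo 0 1)
    (hX : X.PosDef) (v : m → 𝕜) :
    ∫ t in Ioi 0, t ^ (-p) * quadFormRe v (X + t • 1)⁻¹ =
      (∫ t in Ioi (0 : ℝ), t ^ (-p) / (1 + t)) * quadFormRe v (cfc (fun x : ℝ => x ^ (-p)) X) := by
  rw [setIntegral_congr_fun measurableSet_Ioi (hX.eqOn_rpow_neg_mul_quadFormRe_inv_add v),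
    integral_finsetSum _ fun i _ =>
      (integrableOn_rpow_neg_div_add hp (hX.eigenvalues_pos i)).const_mul _,
    hX.1.quadFormRe_cfc, Finset.mul_sum]
  refine Finset.sum_congr rfl fun i _ => ?_
  rw [integral_const_mul, integral_rpow_neg_div_add hp (hX.eigenvalues_pos i)]
  ring

end ResolventIntegral

section Schur

lemma Matrix.PosDef.smul_add_one_sub_smul {m 𝕜 : Type*} [RCLike 𝕜] {A B : Matrix m m 𝕜}
    (hA : A.PosDef) (hB : B.PosDef) {α : ℝ} (hα0 : 0 ≤ α) (hα1 : α ≤ 1) :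
    (α • A + (1 - α) • B).PosDef := by
  rcases hα0.eq_or_lt with rfl | hα
  · simpa using hB
  · exact (hA.smul hα).add_posSemidef (hB.posSemidef.smul (sub_nonneg.mpr hα1))

variable {m n 𝕜 : Type*} [Fintype m] [DecidableEq m] [Fintype n] [RCLike 𝕜]

/-- `!![N, B; Bᴴ, Bᴴ N⁻¹ B]` is positive semidefinite, its Schur complement being `0`; the
difference below is the Schur complement of the convex combination of two such blocks. -/
lemma conjTranspose_mul_inv_mul_jointlyConvex {N₁ N₂ : Matrix m m 𝕜} (hN₁ : N₁.PosDef)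
    (hN₂ : N₂.PosDef) (B₁ B₂ : Matrix m n 𝕜) {α : ℝ} (hα0 : 0 ≤ α) (hα1 : α ≤ 1) :
    (α • (B₁ᴴ * N₁⁻¹ * B₁) + (1 - α) • (B₂ᴴ * N₂⁻¹ * B₂) - (α • B₁ + (1 - α) • B₂)ᴴ *
      (α • N₁ + (1 - α) • N₂)⁻¹ * (α • B₁ + (1 - α) • B₂)).PosSemidef := by
  have block {N : Matrix m m 𝕜} (hN : N.PosDef) (B : Matrix m n 𝕜) :
      (fromBlocks N B Bᴴ (Bᴴ * N⁻¹ * B)).PosSemidef := by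
    have := hN.isUnit.invertible
    rw [hN.fromBlocks₁₁, sub_self]
    exact .zero
  have hcomb := ((block hN₁ B₁).smul hα0).add ((block hN₂ B₂).smul (sub_nonneg.mpr hα1))
  have hB : (α • B₁ + (1 - α) • B₂)ᴴ = α • B₁ᴴ + (1 - α) • B₂ᴴ := by
    simp [conjTranspose_add, conjTranspose_smul]
  rw [fromBlocks_smul, fromBlocks_smul, fromBlocks_add, ← hB] at hcomb
  have hN := hN₁.smul_add_one_sub_smul hN₂ hα0 hα1
  have := hN.isUnit.invertible
  exact hN.fromBlocks₁₁ _ _ |>.mp hcomb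

end Schur

lemma Matrix.mul_inv_mul_add_smul_one_mul {m 𝕜 : Type*} [Fintype m] [DecidableEq m] [RCLike 𝕜]
    {S T C : Matrix m m 𝕜} (hTS : T * S = 1) (hSS : S * S = C) (M : Matrix m m 𝕜) (t : ℝ) :
    S * (T * M * T + t • 1)⁻¹ * S = C * (M + t • C)⁻¹ * C := by
  have hST : S * T = 1 := mul_eq_one_comm.mp hTS
  have hTCT : T * C * T = 1 := by
    rw [← hSS, ← mul_assoc, hTS, one_mul, hST]
  have hconj : T * M * T + t • 1 = T * (M + t • C) * T := by
    rw [mul_add, add_mul, Matrix.mul_smul, Matrix.smul_mul, hTCT]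
  rw [hconj, mul_inv_rev, mul_inv_rev, inv_eq_left_inv hST, ← hSS]
  simp only [mul_assoc]

section MatrixPower

variable {n : ℕ}

lemma mpow_eq_cfc (A : Matrix (Fin n) (Fin n) ℂ) (q : ℝ) :
    mpow A q = cfc (fun x : ℝ => x ^ q) A := by
  by_cases hA : A.IsHermitian
  · rw [mpow, dif_pos hA, hA.cfc_eq, IsHermitian.cfc, Unitary.conjStarAlgAut_apply]
    rfl
  · rw [mpow, dif_neg hA, cfc_apply_of_not_predicate A fun h => hA h.isHermitian]

lemma isHermitian_mpow (A : Matrix (Fin n) (Fin n) ℂ) (q : ℝ) : (mpow A q).IsHermitian := by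
  rw [mpow_eq_cfc]
  exact IsSelfAdjoint.isHermitian (cfc_predicate _ A)

lemma mpow_add {A : Matrix (Fin n) (Fin n) ℂ} (hA : A.PosDef) (q r : ℝ) :
    mpow A (q + r) = mpow A q * mpow A r := by
  simp only [mpow_eq_cfc]
  rw [← cfc_mul _ _ A (continuousOn_spectrum _) (continuousOn_spectrum _)]
  exact cfc_congr fun x hx => Real.rpow_add (hA.pos_of_mem_spectrum hx) q r

lemma mpow_zero {A : Matrix (Fin n) (Fin n) ℂ} (hA : A.IsHermitian) : mpow A 0 = 1 := by
  simp [mpow_eq_cfc, cfc_const_one ℝ A hA.isSelfAdjoint]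

lemma mpow_one {A : Matrix (Fin n) (Fin n) ℂ} (hA : A.IsHermitian) : mpow A 1 = A := by
  simp [mpow_eq_cfc, cfc_id' ℝ A hA.isSelfAdjoint]

lemma mpow_half_mul_mpow_half {A : Matrix (Fin n) (Fin n) ℂ} (hA : A.PosDef) :
    mpow A (1 / 2) * mpow A (1 / 2) = A := by
  rw [← mpow_add hA, add_halves, mpow_one hA.1]

lemma mpow_neg_half_mul_mpow_half {A : Matrix (Fin n) (Fin n) ℂ} (hA : A.PosDef) :
    mpow A (-(1 / 2)) * mpow A (1 / 2) = 1 := by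
  rw [← mpow_add hA, neg_add_cancel, mpow_zero hA.1]

end MatrixPower

section Perspective

variable {n : ℕ}

/-- The operator perspective of `x ↦ x ^ (-p)`. -/
noncomputable def negRpowPersp (p : ℝ) (M C : Matrix (Fin n) (Fin n) ℂ) :
    Matrix (Fin n) (Fin n) ℂ :=
  mpow C (1 / 2) * mpow (mpow C (-(1 / 2)) * M * mpow C (-(1 / 2))) (-p) * mpow C (1 / 2)

lemma persp_eq_negRpowPersp (lam p : ℝ) (A B C : Matrix (Fin n) (Fin n) ℂ) :
    persp lam p A B C = negRpowPersp p (lam • A + (1 - lam) • B) C :=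
  rfl

lemma isHermitian_negRpowPersp (p : ℝ) (M C : Matrix (Fin n) (Fin n) ℂ) :
    (negRpowPersp p M C).IsHermitian := by
  have h := isHermitian_mul_mul_conjTranspose (mpow C (1 / 2)) (isHermitian_mpow
    (mpow C (-(1 / 2)) * M * mpow C (-(1 / 2))) (-p))
  rwa [(isHermitian_mpow C (1 / 2)).eq] at h

variable {p : ℝ} {M C : Matrix (Fin n) (Fin n) ℂ}

lemma quadFormRe_mul_inv_add_smul_mul (hC : C.PosDef)
    (v : Fin n → ℂ) (t : ℝ) :
    quadFormRe v (C * (M + t • C)⁻¹ * C) =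
      quadFormRe (mpow C (1 / 2) *ᵥ v) (mpow C (-(1 / 2)) * M * mpow C (-(1 / 2)) + t • 1)⁻¹ := by
  rw [← mul_inv_mul_add_smul_one_mul (mpow_neg_half_mul_mpow_half hC)
    (mpow_half_mul_mpow_half hC), (isHermitian_mpow C (1 / 2)).quadFormRe_mul_mul]

lemma Matrix.PosDef.mpow_neg_half_conj (hM : M.PosDef) (hC : C.PosDef) :
    (mpow C (-(1 / 2)) * M * mpow C (-(1 / 2))).PosDef := by
  have hT := isHermitian_mpow C (-(1 / 2))
  have hunit := IsUnit.of_mul_eq_one _ (mpow_neg_half_mul_mpow_half hC)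
  have h := (IsUnit.posDef_star_left_conjugate_iff hunit).mpr hM
  rwa [star_eq_conjTranspose, hT.eq] at h

lemma integrableOn_rpow_neg_mul_quadFormRe_mul_inv_add_smul_mul (hp : p ∈ Ioo 0 1)
    (hM : M.PosDef) (hC : C.PosDef) (v : Fin n → ℂ) :
    IntegrableOn (fun t : ℝ => t ^ (-p) * quadFormRe v (C * (M + t • C)⁻¹ * C)) (Ioi 0) := by
  simp_rw [quadFormRe_mul_inv_add_smul_mul hC]
  exact (hM.mpow_neg_half_conj hC).integrableOn_rpow_neg_mul_quadFormRe_inv_add hp _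

lemma integral_rpow_neg_mul_quadFormRe_mul_inv_add_smul_mul (hp : p ∈ Ioo 0 1)
    (hM : M.PosDef) (hC : C.PosDef) (v : Fin n → ℂ) :
    ∫ t in Ioi 0, t ^ (-p) * quadFormRe v (C * (M + t • C)⁻¹ * C) =
      (∫ t in Ioi (0 : ℝ), t ^ (-p) / (1 + t)) * quadFormRe v (negRpowPersp p M C) := by
  simp_rw [quadFormRe_mul_inv_add_smul_mul hC]
  rw [(hM.mpow_neg_half_conj hC).integral_rpow_neg_mul_quadFormRe_inv_add hp, ← mpow_eq_cfc,
    negRpowPersp, (isHermitian_mpow C (1 / 2)).quadFormRe_mul_mul]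

end Perspective

section JointConvexity

variable {n : ℕ} {p α : ℝ} {M₁ C₁ M₂ C₂ : Matrix (Fin n) (Fin n) ℂ}

lemma quadFormRe_mul_inv_add_smul_mul_jointlyConvex (hM₁ : M₁.PosDef) (hC₁ : C₁.PosDef)
    (hM₂ : M₂.PosDef) (hC₂ : C₂.PosDef) (hα0 : 0 ≤ α) (hα1 : α ≤ 1) {t : ℝ} (ht : 0 ≤ t)
    (v : Fin n → ℂ) :
    quadFormRe v ((α • C₁ + (1 - α) • C₂) *
        (α • M₁ + (1 - α) • M₂ + t • (α • C₁ + (1 - α) • C₂))⁻¹ * (α • C₁ + (1 - α) • C₂)) ≤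
      α * quadFormRe v (C₁ * (M₁ + t • C₁)⁻¹ * C₁) +
        (1 - α) * quadFormRe v (C₂ * (M₂ + t • C₂)⁻¹ * C₂) := by
  have hN : α • M₁ + (1 - α) • M₂ + t • (α • C₁ + (1 - α) • C₂) =
      α • (M₁ + t • C₁) + (1 - α) • (M₂ + t • C₂) := by
    module
  have h := conjTranspose_mul_inv_mul_jointlyConvex
    (hM₁.add_posSemidef (hC₁.posSemidef.smul ht)) (hM₂.add_posSemidef (hC₂.posSemidef.smul ht))
    C₁ C₂ hα0 hα1
  rw [hC₁.1.eq, hC₂.1.eq, (hC₁.smul_add_one_sub_smul hC₂ hα0 hα1).1.eq, ← hN] at h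
  have hq : 0 ≤ quadFormRe v _ := h.re_dotProduct_nonneg v
  rwa [map_sub, map_add, map_smul, map_smul, smul_eq_mul, smul_eq_mul, sub_nonneg] at hq

theorem negRpowPersp_jointlyConvex (hp : p ∈ Ioo 0 1) (hM₁ : M₁.PosDef) (hC₁ : C₁.PosDef)
    (hM₂ : M₂.PosDef) (hC₂ : C₂.PosDef) (hα0 : 0 ≤ α) (hα1 : α ≤ 1) :
    (α • negRpowPersp p M₁ C₁ + (1 - α) • negRpowPersp p M₂ C₂ -
      negRpowPersp p (α • M₁ + (1 - α) • M₂) (α • C₁ + (1 - α) • C₂)).PosSemidef := by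
  have hM := hM₁.smul_add_one_sub_smul hM₂ hα0 hα1
  have hC := hC₁.smul_add_one_sub_smul hC₂ hα0 hα1
  have hherm := (((isHermitian_negRpowPersp p M₁ C₁).smul (.all α)).add
    ((isHermitian_negRpowPersp p M₂ C₂).smul (.all (1 - α)))).sub
    (isHermitian_negRpowPersp p (α • M₁ + (1 - α) • M₂) (α • C₁ + (1 - α) • C₂))
  refine .of_quadFormRe_nonneg hherm fun v => ?_
  have hint₁ := integrableOn_rpow_neg_mul_quadFormRe_mul_inv_add_smul_mul hp hM₁ hC₁ v
  have hint₂ := integrableOn_rpow_neg_mul_quadFormRe_mul_inv_add_smul_mul hp hM₂ hC₂ v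
  have hpointwise : ∀ t ∈ Ioi (0 : ℝ), t ^ (-p) * quadFormRe v ((α • C₁ + (1 - α) • C₂) *
      (α • M₁ + (1 - α) • M₂ + t • (α • C₁ + (1 - α) • C₂))⁻¹ * (α • C₁ + (1 - α) • C₂)) ≤
      α * (t ^ (-p) * quadFormRe v (C₁ * (M₁ + t • C₁)⁻¹ * C₁)) +
        (1 - α) * (t ^ (-p) * quadFormRe v (C₂ * (M₂ + t • C₂)⁻¹ * C₂)) := fun t ht => by
    have hconvex := quadFormRe_mul_inv_add_smul_mul_jointlyConvex hM₁ hC₁ hM₂ hC₂ hα0 hα1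
      (le_of_lt ht) v
    have ht' : 0 ≤ t ^ (-p) := Real.rpow_nonneg (le_of_lt ht) _
    linarith [mul_le_mul_of_nonneg_left hconvex ht']
  rw [map_sub, map_add, map_smul, map_smul, smul_eq_mul, smul_eq_mul, sub_nonneg]
  refine le_of_mul_le_mul_left ?_ (integral_rpow_neg_div_one_add_pos hp)
  calc _ = ∫ t in Ioi 0, t ^ (-p) * quadFormRe v ((α • C₁ + (1 - α) • C₂) *
        (α • M₁ + (1 - α) • M₂ + t • (α • C₁ + (1 - α) • C₂))⁻¹ * (α • C₁ + (1 - α) • C₂)) :=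
        (integral_rpow_neg_mul_quadFormRe_mul_inv_add_smul_mul hp hM hC v).symm
    _ ≤ ∫ t in Ioi 0, (α * (t ^ (-p) * quadFormRe v (C₁ * (M₁ + t • C₁)⁻¹ * C₁)) +
        (1 - α) * (t ^ (-p) * quadFormRe v (C₂ * (M₂ + t • C₂)⁻¹ * C₂))) :=
        setIntegral_mono_on (integrableOn_rpow_neg_mul_quadFormRe_mul_inv_add_smul_mul hp hM hC v)
          ((hint₁.const_mul α).add (hint₂.const_mul (1 - α))) measurableSet_Ioi hpointwise
    _ = _ := by
        rw [integral_add (hint₁.const_mul α) (hint₂.const_mul (1 - α)), integral_const_mul,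
          integral_const_mul, integral_rpow_neg_mul_quadFormRe_mul_inv_add_smul_mul hp hM₁ hC₁,
          integral_rpow_neg_mul_quadFormRe_mul_inv_add_smul_mul hp hM₂ hC₂]
        ring

end JointConvexity

theorem stmt12 {n : ℕ} (p lam : ℝ) (hp0 : 0 < p) (hp1 : p < 1)
    (hl0 : 0 ≤ lam) (hl1 : lam ≤ 1)
    (A₁ B₁ C₁ A₂ B₂ C₂ : Matrix (Fin n) (Fin n) ℂ)
    (hA₁ : A₁.PosDef) (hB₁ : B₁.PosDef) (hC₁ : C₁.PosDef)
    (hA₂ : A₂.PosDef) (hB₂ : B₂.PosDef) (hC₂ : C₂.PosDef)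
    (α : ℝ) (hα0 : 0 ≤ α) (hα1 : α ≤ 1) :
    ((α • persp lam p A₁ B₁ C₁ + (1 - α) • persp lam p A₂ B₂ C₂) -
      persp lam p (α • A₁ + (1 - α) • A₂) (α • B₁ + (1 - α) • B₂)
        (α • C₁ + (1 - α) • C₂)).PosSemidef := by
  have hM : lam • (α • A₁ + (1 - α) • A₂) + (1 - lam) • (α • B₁ + (1 - α) • B₂) =
      α • (lam • A₁ + (1 - lam) • B₁) + (1 - α) • (lam • A₂ + (1 - lam) • B₂) := by
    module
  simp only [persp_eq_negRpowPersp]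
  rw [hM]
  exact negRpowPersp_jointlyConvex ⟨hp0, hp1⟩ (hA₁.smul_add_one_sub_smul hB₁ hl0 hl1) hC₁
    (hA₂.smul_add_one_sub_smul hB₂ hl0 hl1) hC₂ hα0 hα1
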